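/- Let μ be a positive finite Radon measure supported in Ω and let v ∈ L¹(μ;ℝ^N) be such that the distribution −div(vμ) : φ ↦ ∫ ∇φ·v dμ belongs to X₀^♯(Ω). Then ∫ ξ·v dμ = 0 for every ξ ∈ N_μ (equivalently, v(x) lies in the tangent space T_μ(x) = N_μ(x)^⊥ for μ-a.e. x). -/

import Mathlib

open MeasureTheory Filter Topology
open scoped NNReal RealInnerProductSpace

noncomputable section

/-- Euclidean space `ℝ^N`. -/
abbrev Euc (N : ℕ) := EuclideanSpace ℝ (Fin N)

/-- Test functions: `C¹` functions with compact support on `ℝ^N`. -/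
def IsTest {N : ℕ} (φ : Euc N → ℝ) : Prop :=
  ContDiff ℝ 1 φ ∧ HasCompactSupport φ

/-- `L^∞(Ω)`-type supremum of a function over the set `Ω`. -/
def supOn {N : ℕ} (Ω : Set (Euc N)) (g : Euc N → ℝ) : ℝ := sSup (g '' Ω)

/-- `f ∈ X₀(Ω)`: distributions of order one with zero average, supported in `Ω`. -/
def MemX0 {N : ℕ} (Ω : Set (Euc N)) (f : (Euc N → ℝ) →ₗ[ℝ] ℝ) : Prop :=
  (∃ C : ℝ, 0 ≤ C ∧ ∀ φ : Euc N → ℝ, IsTest φ →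
      |f φ| ≤ C * (supOn Ω (fun x => |φ x|) + supOn Ω (fun x => ‖gradient φ x‖))) ∧
  ∀ φ : Euc N → ℝ, IsTest φ → (∃ c : ℝ, ∀ x ∈ Ω, φ x = c) → f φ = 0

/-- `f ∈ X₀^♯(Ω)`. -/
def MemX0sharp {N : ℕ} (Ω : Set (Euc N)) (f : (Euc N → ℝ) →ₗ[ℝ] ℝ) : Prop :=
  MemX0 Ω f ∧ ∀ ε : ℝ, 0 < ε → ∃ C : ℝ, 0 < C ∧ ∀ φ : Euc N → ℝ, IsTest φ →
    |f φ| ≤ C * supOn Ω (fun x => |φ x|) + ε * supOn Ω (fun x => ‖gradient φ x‖)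

/-- The Wasserstein norm `W¹(f)`. -/
def W1 {N : ℕ} (f : (Euc N → ℝ) →ₗ[ℝ] ℝ) : ℝ :=
  sSup {r : ℝ | ∃ φ : Euc N → ℝ, IsTest φ ∧ (∀ x, ‖gradient φ x‖ ≤ 1) ∧ r = f φ}

/-- `ξ ∈ N_μ`: `ξ ∈ L^∞(μ; ℝ^N)` is the weak* limit in `L^∞(μ; ℝ^N)` of gradients of
smooth functions tending to `0` uniformly. -/
def MemN {N : ℕ} (μ : Measure (Euc N)) (ξ : Euc N → Euc N) : Prop :=
  AEStronglyMeasurable ξ μ ∧ (∃ C : ℝ, ∀ᵐ x ∂μ, ‖ξ x‖ ≤ C) ∧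
  ∃ u : ℕ → Euc N → ℝ,
    (∀ n, ContDiff ℝ (⊤ : ℕ∞) (u n)) ∧
    (∃ C : ℝ, ∀ n x, ‖gradient (u n) x‖ ≤ C) ∧
    TendstoUniformly u 0 atTop ∧
    ∀ g : Euc N → Euc N, Integrable g μ →
      Tendsto (fun n => ∫ x, ⟪gradient (u n) x, g x⟫ ∂μ) atTop
        (𝓝 (∫ x, ⟪ξ x, g x⟫ ∂μ))


/-- If `μ` is a positive finite (Radon) measure supported in `Ω`,
`v ∈ L¹(μ; ℝ^N)` and the distribution `−div(vμ) : φ ↦ ∫ ∇φ · v dμ` belongs to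
`X₀^♯(Ω)`, then `∫ ξ · v dμ = 0` for every `ξ ∈ N_μ`. -/
theorem statement7 {N : ℕ} (Ω : Set (Euc N)) (hΩconv : Convex ℝ Ω) (hΩcomp : IsCompact Ω)
    (μ : Measure (Euc N)) (hμfin : IsFiniteMeasure μ) (hμsupp : μ Ωᶜ = 0)
    (v : Euc N → Euc N) (hv : Integrable v μ)
    (f : (Euc N → ℝ) →ₗ[ℝ] ℝ)
    (hfv : ∀ φ : Euc N → ℝ, IsTest φ → f φ = ∫ x, ⟪gradient φ x, v x⟫ ∂μ)
    (hf : MemX0sharp Ω f) :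
    ∀ ξ : Euc N → Euc N, MemN μ ξ → ∫ x, ⟪ξ x, v x⟫ ∂μ = 0 := by
  intro ξ hξ
  obtain ⟨hξm, hξb, u, hu_smooth, ⟨Cg, hCg⟩, hu_unif, hu_weak⟩ := hξ
  -- a ball containing Ω
  obtain ⟨R, hR0, hΩR⟩ : ∃ R : ℝ, 0 < R ∧ Ω ⊆ Metric.ball 0 R := by
    obtain ⟨R, hR⟩ := hΩcomp.isBounded.subset_ball (0 : Euc N)
    exact ⟨max R 1, lt_of_lt_of_le one_pos (le_max_right _ _),
      hR.trans (Metric.ball_subset_ball (le_max_left _ _))⟩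
  -- bump function
  set b : ContDiffBump (0 : Euc N) := ⟨R, R + 1, hR0, by linarith⟩ with hb
  -- cut-off test functions
  set φ : ℕ → Euc N → ℝ := fun n x => b x * u n x with hφ
  have hone : ∀ x ∈ Metric.ball (0 : Euc N) R, b x = 1 := fun x hx =>
    b.one_of_mem_closedBall (Metric.ball_subset_closedBall hx)
  have hφΩ : ∀ n, ∀ x ∈ Ω, φ n x = u n x := fun n x hx => by
    simp [hφ, hone x (hΩR hx)]
  have hgradΩ : ∀ n, ∀ x ∈ Ω, gradient (φ n) x = gradient (u n) x := by
    intro n x hx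
    have hEq : φ n =ᶠ[𝓝 x] u n := by
      filter_upwards [Metric.isOpen_ball.mem_nhds (hΩR hx)] with y hy
      simp [hφ, hone y hy]
    exact hEq.gradient_eq
  have hφtest : ∀ n, IsTest (φ n) := by
    intro n
    refine ⟨(b.contDiff (n := 1)).mul ((hu_smooth n).of_le (by simp)), ?_⟩
    exact b.hasCompactSupport.mul_right
  -- a.e. membership in Ω
  have hae : ∀ᵐ x ∂μ, x ∈ Ω := by
    rw [MeasureTheory.ae_iff]
    exact hμsupp
  -- f (φ n) equals the integral against ∇ u n
  have hfval : ∀ n, f (φ n) = ∫ x, ⟪gradient (u n) x, v x⟫ ∂μ := by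
    intro n
    rw [hfv (φ n) (hφtest n)]
    refine MeasureTheory.integral_congr_ae ?_
    filter_upwards [hae] with x hx
    rw [hgradΩ n x hx]
  have hconv : Tendsto (fun n => f (φ n)) atTop (𝓝 (∫ x, ⟪ξ x, v x⟫ ∂μ)) := by
    simp only [hfval]
    exact hu_weak v hv
  set L : ℝ := ∫ x, ⟪ξ x, v x⟫ ∂μ with hL
  set C' : ℝ := max Cg 0 with hC'
  have hC'0 : 0 ≤ C' := le_max_right _ _
  -- uniform bound on the gradient sup
  have hsupgrad : ∀ n, supOn Ω (fun x => ‖gradient (φ n) x‖) ≤ C' := by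
    intro n
    apply Real.sSup_le _ hC'0
    rintro r ⟨x, hx, rfl⟩
    dsimp only
    rw [hgradΩ n x hx]
    exact (hCg n x).trans (le_max_left _ _)
  -- the key estimate for each ε
  have key : ∀ ε : ℝ, 0 < ε → |L| ≤ ε * (1 + C') := by
    intro ε hε
    obtain ⟨Cε, hCε0, hCε⟩ := hf.2 ε hε
    have hεC : 0 < ε / Cε := div_pos hε hCε0
    have hev : ∀ᶠ n in atTop, |f (φ n)| ≤ ε * (1 + C') := by
      filter_upwards [Metric.tendstoUniformly_iff.mp hu_unif (ε / Cε) hεC] with n hn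
      have hsupφ : supOn Ω (fun x => |φ n x|) ≤ ε / Cε := by
        apply Real.sSup_le _ hεC.le
        rintro r ⟨x, hx, rfl⟩
        dsimp only
        rw [hφΩ n x hx]
        have := hn x
        simp only [Pi.zero_apply, Real.dist_eq, zero_sub, abs_neg] at this
        exact this.le
      calc |f (φ n)| ≤ Cε * supOn Ω (fun x => |φ n x|)
            + ε * supOn Ω (fun x => ‖gradient (φ n) x‖) := hCε (φ n) (hφtest n)
        _ ≤ Cε * (ε / Cε) + ε * C' := by
            have := hsupgrad n
            gcongr
        _ = ε * (1 + C') := by field_simp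
    exact le_of_tendsto hconv.abs hev
  have hL0 : |L| ≤ 0 := by
    by_contra h
    push_neg at h
    have h1 : (0:ℝ) < 1 + C' := by linarith
    have := key (|L| / (2 * (1 + C'))) (by positivity)
    rw [div_mul_eq_mul_div, mul_comm] at this
    have h2 : (1 + C') * |L| / (2 * (1 + C')) = |L| / 2 := by
      field_simp
    rw [h2] at this
    linarith
  exact abs_nonpos_iff.mp hL0
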